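/- arXiv:1404.5023 — 2 statements merged into one kernel-verified Lean document; each statement's English description precedes it below -/
import Mathlib

section
/- For every quadratic Lie algebra (g,B) there is a linear isomorphism of vector spaces H²(g,ℂ) ≅ Der_a(g)/ad(g); in particular dim Z²(g,ℂ) − dim B²(g,ℂ) = dim Der_a(g) − dim ad(g). -/
/-!
Nondegeneracy of `B` identifies endomorphisms of `g` with bilinear forms through
`D ↦ B (D ·) ·`. For symmetric `B`, the form of `D` is alternating exactly when `D` is
skew-symmetric, and then invariance turns the cocycle expression of the form at `(x, y, z)` into
`B (D ⁅x, y⁆ - ⁅D x, y⁆ - ⁅x, D y⁆) z`; so skew derivations correspond to 2-cocycles.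
Invariance also gives `B ⁅w, x⁆ y = B w ⁅x, y⁆`, so `ad w` corresponds to the coboundary of
`B w`, and every functional is some `B w`. An isomorphism matching the two pairs of nested
subspaces matches the quotients.
-/

open Module

attribute [local instance 100] LieRing.ofAssociativeRing

/-- The space of 2-cocycles (trivial coefficients). -/
noncomputable def twoCocycles (g : Type) [LieRing g] [LieAlgebra ℂ g] :
    Submodule ℂ (g →ₗ[ℂ] g →ₗ[ℂ] ℂ) where
  carrier := {Ω | (∀ x, Ω x x = 0) ∧
    ∀ x y z, Ω ⁅x, y⁆ z + Ω ⁅y, z⁆ x + Ω ⁅z, x⁆ y = 0}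
  add_mem' := by
    rintro a b ⟨ha1, ha2⟩ ⟨hb1, hb2⟩
    refine ⟨fun x => ?_, fun x y z => ?_⟩
    · simp [ha1 x, hb1 x]
    · simp only [LinearMap.add_apply]
      linear_combination ha2 x y z + hb2 x y z
  smul_mem' := by
    rintro c a ⟨ha1, ha2⟩
    refine ⟨fun x => ?_, fun x y z => ?_⟩
    · simp [ha1 x]
    · simp only [LinearMap.smul_apply, smul_eq_mul]
      linear_combination c * ha2 x y z
  zero_mem' := ⟨fun x => rfl, fun x y z => by simp⟩

/-- The space of 2-coboundaries (trivial coefficients). -/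
noncomputable def twoCoboundaries (g : Type) [LieRing g] [LieAlgebra ℂ g] :
    Submodule ℂ (g →ₗ[ℂ] g →ₗ[ℂ] ℂ) where
  carrier := {Ω | ∃ f : g →ₗ[ℂ] ℂ, ∀ x y, Ω x y = f ⁅x, y⁆}
  add_mem' := by
    rintro a b ⟨f, hf⟩ ⟨f', hf'⟩
    exact ⟨f + f', fun x y => by simp [hf x y, hf' x y]⟩
  smul_mem' := by
    rintro c a ⟨f, hf⟩
    exact ⟨c • f, fun x y => by simp [hf x y]⟩
  zero_mem' := ⟨0, fun x y => by simp⟩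

/-- Skew-symmetric derivations of a quadratic Lie algebra `(g, B)`. -/
noncomputable def skewDer (g : Type) [LieRing g] [LieAlgebra ℂ g]
    (B : g →ₗ[ℂ] g →ₗ[ℂ] ℂ) : Submodule ℂ (Module.End ℂ g) where
  carrier := {D | (∀ x y, D ⁅x, y⁆ = ⁅D x, y⁆ + ⁅x, D y⁆) ∧
    ∀ x y, B (D x) y = - B x (D y)}
  add_mem' := by
    rintro a b ⟨ha1, ha2⟩ ⟨hb1, hb2⟩
    refine ⟨fun x y => ?_, fun x y => ?_⟩
    · simp only [LinearMap.add_apply, ha1 x y, hb1 x y, add_lie, lie_add]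
      abel
    · simp only [LinearMap.add_apply, map_add, ha2 x y, hb2 x y]
      ring
  smul_mem' := by
    rintro c a ⟨ha1, ha2⟩
    refine ⟨fun x y => ?_, fun x y => ?_⟩
    · simp [LinearMap.smul_apply, ha1 x y, smul_add, lie_smul, smul_lie]
    · simp only [LinearMap.smul_apply, map_smul, ha2 x y, smul_eq_mul]
      ring
  zero_mem' := ⟨fun x y => by simp, fun x y => by simp⟩

/-- The space `ad(g)` of inner derivations, as a submodule of endomorphisms. -/
noncomputable def adRange (g : Type) [LieRing g] [LieAlgebra ℂ g] :
    Submodule ℂ (Module.End ℂ g) :=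
  LinearMap.range (LieAlgebra.ad ℂ g).toLinearMap

namespace LinearEquiv

variable {R M N : Type*} [Ring R] [AddCommGroup M] [Module R M] [AddCommGroup N] [Module R N]

noncomputable def subquotientCongr (e : M ≃ₗ[R] N) {p q : Submodule R M}
    {p' q' : Submodule R N} (hp : p'.comap (e : M →ₗ[R] N) = p)
    (hq : q'.comap (e : M →ₗ[R] N) = q) :
    (p ⧸ q.comap p.subtype) ≃ₗ[R] (p' ⧸ q'.comap p'.subtype) := by
  subst hp hq
  refine Submodule.Quotient.equiv _ _ (e.ofSubmodule' p') ?_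
  ext y
  constructor
  · rintro ⟨x, hxq, rfl⟩
    exact hxq
  · intro hyq
    exact ⟨(e.ofSubmodule' p').symm y, by simpa using hyq, by simp⟩

end LinearEquiv

section Quadratic

variable {g : Type} [LieRing g] [LieAlgebra ℂ g] {B : g →ₗ[ℂ] g →ₗ[ℂ] ℂ}

theorem isAlt_comp_iff (hsym : ∀ x y, B x y = B y x) {D : Module.End ℂ g} :
    (B ∘ₗ D).IsAlt ↔ ∀ x y, B (D x) y = -B x (D y) := by
  rw [LinearMap.isAlt_iff_eq_neg_flip, LinearMap.ext_iff₂]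
  simp [hsym]

theorem cyclic_sum_comp_eq (hsym : ∀ x y, B x y = B y x)
    (hinv : ∀ x y z, B ⁅x, y⁆ z = B x ⁅y, z⁆) {D : Module.End ℂ g}
    (hD : ∀ x y, B (D x) y = -B x (D y)) (x y z : g) :
    B (D ⁅x, y⁆) z + B (D ⁅y, z⁆) x + B (D ⁅z, x⁆) y =
      B (D ⁅x, y⁆ - ⁅D x, y⁆ - ⁅x, D y⁆) z := by
  have h₁ : B (D ⁅y, z⁆) x = -B ⁅D x, y⁆ z := by rw [hD, hsym, hinv]
  have h₂ : B (D ⁅z, x⁆) y = -B ⁅x, D y⁆ z := by rw [hD, hsym, hinv, ← hinv, hsym]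
  simp only [map_sub, LinearMap.sub_apply, h₁, h₂]
  ring

theorem mem_skewDer_iff_comp_mem_twoCocycles (hsym : ∀ x y, B x y = B y x)
    (hinv : ∀ x y z, B ⁅x, y⁆ z = B x ⁅y, z⁆) (hnd : ∀ x, (∀ y, B x y = 0) → x = 0)
    {D : Module.End ℂ g} : D ∈ skewDer g B ↔ B ∘ₗ D ∈ twoCocycles g := by
  refine ⟨fun ⟨hder, hskew⟩ => ⟨(isAlt_comp_iff hsym).2 hskew, fun x y z => ?_⟩,
    fun ⟨halt, hcoc⟩ => ?_⟩
  · simp only [LinearMap.comp_apply]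
    rw [cyclic_sum_comp_eq hsym hinv hskew, hder, sub_sub, sub_self, map_zero,
      LinearMap.zero_apply]
  · have hskew := (isAlt_comp_iff hsym).1 halt
    refine ⟨fun x y => ?_, hskew⟩
    have h := hnd _ fun z => (cyclic_sum_comp_eq hsym hinv hskew x y z).symm.trans (hcoc x y z)
    rwa [sub_sub, sub_eq_zero] at h

theorem mem_adRange_iff_comp_mem_twoCoboundaries [FiniteDimensional ℂ g]
    (hinv : ∀ x y z, B ⁅x, y⁆ z = B x ⁅y, z⁆) (hnd : ∀ x, (∀ y, B x y = 0) → x = 0)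
    {D : Module.End ℂ g} : D ∈ adRange g ↔ B ∘ₗ D ∈ twoCoboundaries g := by
  constructor
  · rintro ⟨w, rfl⟩
    exact ⟨B w, hinv w⟩
  · rintro ⟨f, hf⟩
    refine ⟨(LinearMap.BilinForm.toDual B (.ofSeparatingLeft hnd)).symm f,
      LinearMap.ext fun x => sub_eq_zero.1 (hnd _ fun y => ?_)⟩
    simp [hinv, ← hf]

end Quadratic

/-- For a quadratic Lie algebra `(g, B)` there is a linear isomorphism
`H²(g, ℂ) ≅ Der_a(g) / ad(g)`; in particular
`dim Z²(g, ℂ) − dim B²(g, ℂ) = dim Der_a(g) − dim ad(g)`. -/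
theorem H2_equiv_skewDer_quotient_ad (g : Type) [LieRing g] [LieAlgebra ℂ g]
    [FiniteDimensional ℂ g] (B : g →ₗ[ℂ] g →ₗ[ℂ] ℂ)
    (hsym : ∀ x y, B x y = B y x)
    (hinv : ∀ x y z, B ⁅x, y⁆ z = B x ⁅y, z⁆)
    (hnd : ∀ x, (∀ y, B x y = 0) → x = 0) :
    Nonempty
      ((@HasQuotient.Quotient ↥(twoCocycles g) (Submodule ℂ ↥(twoCocycles g))
          (Submodule.hasQuotient (R := ℂ) (M := ↥(twoCocycles g))) ((twoCoboundaries g).comap (twoCocycles g).subtype)) ≃ₗ[ℂ]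
        (@HasQuotient.Quotient ↥(skewDer g B) (Submodule ℂ ↥(skewDer g B))
          (Submodule.hasQuotient (R := ℂ) (M := ↥(skewDer g B))) ((adRange g).comap (skewDer g B).subtype))) ∧
    (finrank ℂ (twoCocycles g) : ℤ) - finrank ℂ (twoCoboundaries g)
      = (finrank ℂ (skewDer g B) : ℤ) - finrank ℂ (adRange g) := by
  let ψ : Module.End ℂ g ≃ₗ[ℂ] (g →ₗ[ℂ] g →ₗ[ℂ] ℂ) :=
    LinearEquiv.congrRight (LinearMap.BilinForm.toDual B (.ofSeparatingLeft hnd))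
  have hcocycles : (twoCocycles g).comap (ψ : Module.End ℂ g →ₗ[ℂ] _) = skewDer g B :=
    Submodule.ext fun _ => (mem_skewDer_iff_comp_mem_twoCocycles hsym hinv hnd).symm
  have hcoboundaries : (twoCoboundaries g).comap (ψ : Module.End ℂ g →ₗ[ℂ] _) = adRange g :=
    Submodule.ext fun _ => (mem_adRange_iff_comp_mem_twoCoboundaries hinv hnd).symm
  refine ⟨⟨(ψ.subquotientCongr hcocycles hcoboundaries).symm⟩, ?_⟩
  rw [← hcocycles, ← hcoboundaries, (ψ.ofSubmodule' _).finrank_eq, (ψ.ofSubmodule' _).finrank_eq]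
end

section
/- For every p ≥ 2, the assignment ad(Y_0) ↦ −ad(Y_0), ad(X_i) ↦ i·ad(X_i) and ad(Y_i) ↦ −i·ad(Y_i) for 1 ≤ i ≤ p yields a well-defined linear map 𝒟 on the Lie algebra ad(j_{2p}) of inner derivations of j_{2p}, and 𝒟 is an invertible derivation of ad(j_{2p}). -/
/-!
The map `𝒟` is the commutator with the diagonal map `d` of `j_{2p}` that scales `X_i` by `i` and
`Y_i` by `-i` for `i ≥ 1`, `X_0` by `1` and `Y_0` by `-1`. Every bracket relation of `j_{2p}` is
homogeneous for these weights, so `d` is a derivation; then `⁅d, ad x⁆ = ad (d x)`, so commuting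
with `d` preserves `ad(j_{2p})` and is a derivation of it. All weights are nonzero, so `d` is onto,
hence so is `𝒟`, which is therefore bijective by finite dimensionality.
-/

attribute [local instance 100] LieRing.ofAssociativeRing

namespace LieDerivation

variable {R L : Type*} [CommRing R] [LieRing L] [LieAlgebra R L] (D : LieDerivation R L L)

theorem lie_toLinearMap_ad (x : L) :
    ⁅(D : Module.End R L), LieAlgebra.ad R L x⁆ = LieAlgebra.ad R L (D x) := by
  ext y
  simp [Ring.lie_def, D.apply_lie_eq_add]

noncomputable def adRangeMap : (LieAlgebra.ad R L).range →ₗ[R] (LieAlgebra.ad R L).range :=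
  (LieAlgebra.ad R (Module.End R L) (D : Module.End R L)).restrict
    (p := (LieAlgebra.ad R L).range.toSubmodule) (q := (LieAlgebra.ad R L).range.toSubmodule) <| by
      rintro _ ⟨x, rfl⟩
      exact ⟨D x, (D.lie_toLinearMap_ad x).symm⟩

theorem adRangeMap_ad (x : L) :
    D.adRangeMap ⟨LieAlgebra.ad R L x, x, rfl⟩ = ⟨LieAlgebra.ad R L (D x), D x, rfl⟩ :=
  Subtype.ext (D.lie_toLinearMap_ad x)

theorem adRangeMap_lie (u v : (LieAlgebra.ad R L).range) :
    D.adRangeMap ⁅u, v⁆ = ⁅D.adRangeMap u, v⁆ + ⁅u, D.adRangeMap v⁆ :=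
  Subtype.ext (leibniz_lie (D : Module.End R L) (u : Module.End R L) (v : Module.End R L))

theorem adRangeMap_surjective (hD : Function.Surjective D) :
    Function.Surjective D.adRangeMap := by
  rintro ⟨_, x, rfl⟩
  obtain ⟨y, rfl⟩ := hD x
  exact ⟨⟨LieAlgebra.ad R L y, y, rfl⟩, D.adRangeMap_ad y⟩

theorem adRangeMap_bijective {K L : Type*} [Field K] [LieRing L] [LieAlgebra K L]
    [FiniteDimensional K L] (D : LieDerivation K L L) (hD : Function.Surjective D) :
    Function.Bijective D.adRangeMap :=
  ⟨LinearMap.injective_iff_surjective.mpr (D.adRangeMap_surjective hD),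
    D.adRangeMap_surjective hD⟩

end LieDerivation

namespace Module.Basis

variable {ι R M : Type*}

theorem surjective_of_apply_eq_smul [Field R] [AddCommGroup M] [Module R M] (b : Basis ι R M)
    {f : M →ₗ[R] M} (w : ι → R) (hw : ∀ s, w s ≠ 0) (hf : ∀ s, f (b s) = w s • b s) :
    Function.Surjective f := by
  rw [← LinearMap.range_eq_top, eq_top_iff, ← b.span_eq, Submodule.span_le]
  rintro _ ⟨s, rfl⟩
  exact ⟨(w s)⁻¹ • b s, by simp [hf, smul_smul, hw]⟩

theorem leibniz_of_apply_eq_smul [CommRing R] [LieRing M] [LieAlgebra R M] (b : Basis ι R M)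
    {d : M →ₗ[R] M} (w : ι → R) (hd : ∀ s, d (b s) = w s • b s)
    (hlie : ∀ s t, d ⁅b s, b t⁆ = (w s + w t) • ⁅b s, b t⁆) (x y : M) :
    d ⁅x, y⁆ = ⁅d x, y⁆ + ⁅x, d y⁆ := by
  let B : M →ₗ[R] M →ₗ[R] M := (LieAlgebra.ad R M : M →ₗ[R] Module.End R M)
  have : B.compr₂ d = B ∘ₗ d + B.compl₂ d := by
    refine LinearMap.ext_basis b b fun s t => ?_
    simp [B, hd, hlie, add_smul]
  simpa [B] using LinearMap.congr_fun₂ this x y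

end Module.Basis

namespace JordanType

/-- `X_n` has weight `weight K n` and `Y_n` weight `-weight K n`; the value `1` at `n = 0` is
what makes `⁅X_{i+1}, Y_i⁆ = X_0` homogeneous. -/
def weight (K : Type*) [One K] [NatCast K] (n : ℕ) : K := if n = 0 then 1 else n

section Weight

variable {K : Type*} [AddGroupWithOne K]

@[simp] theorem weight_zero : weight K 0 = 1 := rfl

theorem weight_of_ne_zero {n : ℕ} (hn : n ≠ 0) : weight K n = n := if_neg hn

theorem weight_ne_zero [CharZero K] (n : ℕ) : weight K n ≠ 0 := by
  unfold weight; split_ifs with h <;> simp [h]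

variable (K) in
def basisWeight (p : ℕ) : Fin (p+1) ⊕ Fin (p+1) → K :=
  Sum.elim (weight K ·) (-weight K ·)

theorem basisWeight_ne_zero [CharZero K] {p : ℕ} (s : Fin (p+1) ⊕ Fin (p+1)) :
    basisWeight K p s ≠ 0 := by
  cases s <;> simp [basisWeight, weight_ne_zero]

end Weight

section Brackets

variable {K g : Type*} [CommRing K] [LieRing g] [LieAlgebra K g] {p : ℕ} {X Y : Fin (p+1) → g}
  {d : g →ₗ[K] g}

theorem map_lie_X_Y (hdX : ∀ i, d (X i) = weight K i • X i)
    (h1 : ∀ i : Fin p, 0 < (i : ℕ) → ⁅Y 0, X i.succ⁆ = X i.castSucc)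
    (h3 : ∀ i : Fin p, 0 < (i : ℕ) → ⁅X i.succ, Y i.castSucc⁆ = X 0)
    (h5 : ⁅Y 0, X 0⁆ = 0) (h6 : ⁅Y 0, X 1⁆ = 0)
    (h9 : ∀ i j : Fin (p+1), j ≠ 0 → i.val ≠ j.val + 1 → ⁅X i, Y j⁆ = 0)
    (i j : Fin (p+1)) :
    d ⁅X i, Y j⁆ = (weight K i - weight K j) • ⁅X i, Y j⁆ := by
  obtain rfl | hj := eq_or_ne j 0
  · rw [← lie_skew]
    cases i using Fin.cases with
    | zero => simp [h5]
    | succ i =>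
      obtain hi | hi := (i : ℕ).eq_zero_or_pos
      · have hp : 1 < p + 1 := by have := i.isLt; omega
        simp [show i.succ = 1 from Fin.ext (by simp [hi, Nat.mod_eq_of_lt hp]), h6]
      rw [h1 i hi, map_neg, hdX, Fin.val_succ, Fin.val_castSucc, weight_of_ne_zero hi.ne',
        weight_of_ne_zero i.val.succ_ne_zero]
      simp only [weight_zero, Fin.val_zero, Nat.cast_succ]
      module
  by_cases hij : i.val = j.val + 1
  · obtain ⟨k, rfl, rfl⟩ : ∃ k : Fin p, i = k.succ ∧ j = k.castSucc :=
      ⟨⟨j, by omega⟩, Fin.ext (by simp [hij]), rfl⟩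
    have hk : 0 < (k : ℕ) := by simpa [Fin.ext_iff, Nat.pos_iff_ne_zero] using hj
    rw [h3 k hk, hdX, Fin.val_succ, Fin.val_castSucc, weight_of_ne_zero hk.ne',
      weight_of_ne_zero k.val.succ_ne_zero]
    simp
  · simp [h9 i j hj hij]

theorem map_lie_Y_Y (hdY : ∀ i, d (Y i) = -weight K i • Y i)
    (h2 : ∀ i : Fin p, 0 < (i : ℕ) → ⁅Y 0, Y i.castSucc⁆ = -Y i.succ)
    (h7 : ⁅Y 0, Y (Fin.last p)⁆ = 0)
    (h8 : ∀ i j : Fin (p+1), i ≠ 0 → j ≠ 0 → ⁅Y i, Y j⁆ = 0) (i j : Fin (p+1)) :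
    d ⁅Y i, Y j⁆ = (-weight K i - weight K j) • ⁅Y i, Y j⁆ := by
  have hY0 (j) : d ⁅Y 0, Y j⁆ = (-weight K 0 - weight K j) • ⁅Y 0, Y j⁆ := by
    cases j using Fin.lastCases with
    | last => simp [h7]
    | cast k =>
      obtain hk | hk := (k : ℕ).eq_zero_or_pos
      · simp [show k.castSucc = 0 from Fin.ext (by simp [hk])]
      rw [h2 k hk, map_neg, hdY, Fin.val_succ, Fin.val_castSucc, weight_of_ne_zero hk.ne',
        weight_of_ne_zero k.val.succ_ne_zero]
      simp only [weight_zero, Nat.cast_succ]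
      module
  obtain rfl | hi := eq_or_ne i 0
  · exact hY0 j
  obtain rfl | hj := eq_or_ne j 0
  · rw [← lie_skew, map_neg, hY0, Fin.val_zero]
    module
  · simp [h8 i j hi hj]

theorem map_lie_basis (b : Module.Basis (Fin (p+1) ⊕ Fin (p+1)) K g)
    (hX : ∀ i, X i = b (Sum.inl i)) (hY : ∀ i, Y i = b (Sum.inr i))
    (hd : ∀ s, d (b s) = basisWeight K p s • b s)
    (h1 : ∀ i : Fin p, 0 < (i : ℕ) → ⁅Y 0, X i.succ⁆ = X i.castSucc)
    (h2 : ∀ i : Fin p, 0 < (i : ℕ) → ⁅Y 0, Y i.castSucc⁆ = -Y i.succ)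
    (h3 : ∀ i : Fin p, 0 < (i : ℕ) → ⁅X i.succ, Y i.castSucc⁆ = X 0)
    (h4 : ∀ i j, ⁅X i, X j⁆ = 0) (h5 : ⁅Y 0, X 0⁆ = 0) (h6 : ⁅Y 0, X 1⁆ = 0)
    (h7 : ⁅Y 0, Y (Fin.last p)⁆ = 0)
    (h8 : ∀ i j : Fin (p+1), i ≠ 0 → j ≠ 0 → ⁅Y i, Y j⁆ = 0)
    (h9 : ∀ i j : Fin (p+1), j ≠ 0 → i.val ≠ j.val + 1 → ⁅X i, Y j⁆ = 0)
    (s t : Fin (p+1) ⊕ Fin (p+1)) :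
    d ⁅b s, b t⁆ = (basisWeight K p s + basisWeight K p t) • ⁅b s, b t⁆ := by
  have hXY := map_lie_X_Y (fun i => hX i ▸ hd (.inl i)) h1 h3 h5 h6 h9
  have hYY := map_lie_Y_Y (fun i => hY i ▸ hd (.inr i)) h2 h7 h8
  rcases s with i | i <;> rcases t with j | j <;>
    simp only [basisWeight, Sum.elim_inl, Sum.elim_inr, ← hX, ← hY]
  · simp [h4]
  · rw [hXY, sub_eq_add_neg]
  · rw [← lie_skew, map_neg, hXY]
    module
  · rw [hYY, sub_eq_add_neg]

end Brackets

end JordanType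

/-- For `p ≥ 2`, the assignment `ad Y_0 ↦ −ad Y_0`,
`ad X_i ↦ i • ad X_i`, `ad Y_i ↦ −(i • ad Y_i)` (`1 ≤ i ≤ p`) yields a well-defined
linear map `𝒟` on the Lie algebra `ad(j_{2p})` of inner derivations of the nilpotent
Jordan-type Lie algebra `j_{2p}`, and `𝒟` is an invertible derivation of `ad(j_{2p})`. -/
theorem jordanType_ad_invertible_derivation
    (p : ℕ)
    (g : Type) [LieRing g] [LieAlgebra ℂ g]
    (b : Module.Basis (Fin (p+1) ⊕ Fin (p+1)) ℂ g)
    (X : Fin (p+1) → g) (Y : Fin (p+1) → g)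
    (hX : ∀ i, X i = b (Sum.inl i)) (hY : ∀ i, Y i = b (Sum.inr i))
    -- the nonzero brackets of `j_{2p}`
    (h1 : ∀ (i : ℕ) (h2i : 2 ≤ i) (hip : i ≤ p),
      ⁅Y 0, X ⟨i, by omega⟩⁆ = X ⟨i - 1, by omega⟩)
    (h2 : ∀ (i : ℕ) (h1i : 1 ≤ i) (hip : i + 1 ≤ p),
      ⁅Y 0, Y ⟨i, by omega⟩⁆ = -(Y ⟨i + 1, by omega⟩))
    (h3 : ∀ (i : ℕ) (h1i : 1 ≤ i) (hip : i + 1 ≤ p),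
      ⁅X ⟨i + 1, by omega⟩, Y ⟨i, by omega⟩⁆ = X 0)
    -- all other brackets of basis vectors vanish
    (h4 : ∀ i j, ⁅X i, X j⁆ = 0)
    (h5 : ⁅Y 0, X 0⁆ = 0)
    (h6 : ⁅Y 0, X 1⁆ = 0)
    (h7 : ⁅Y 0, Y ⟨p, by omega⟩⁆ = 0)
    (h8 : ∀ i j : Fin (p+1), i ≠ 0 → j ≠ 0 → ⁅Y i, Y j⁆ = 0)
    (h9 : ∀ i j : Fin (p+1), j ≠ 0 → i.val ≠ j.val + 1 → ⁅X i, Y j⁆ = 0) :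
    ∃ D : (LieAlgebra.ad ℂ g).range →ₗ[ℂ] (LieAlgebra.ad ℂ g).range,
      (D ⟨LieAlgebra.ad ℂ g (Y 0), Y 0, rfl⟩ = -⟨LieAlgebra.ad ℂ g (Y 0), Y 0, rfl⟩) ∧
      (∀ i : Fin (p+1), i ≠ 0 →
        D ⟨LieAlgebra.ad ℂ g (X i), X i, rfl⟩
            = (i.val : ℂ) • ⟨LieAlgebra.ad ℂ g (X i), X i, rfl⟩ ∧
        D ⟨LieAlgebra.ad ℂ g (Y i), Y i, rfl⟩
            = -((i.val : ℂ) • ⟨LieAlgebra.ad ℂ g (Y i), Y i, rfl⟩)) ∧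
      (∀ u v : (LieAlgebra.ad ℂ g).range, D ⁅u, v⁆ = ⁅D u, v⁆ + ⁅u, D v⁆) ∧
      Function.Bijective D := by
  have : Module.Finite ℂ g := .of_basis b
  let w := JordanType.basisWeight ℂ p
  let d : g →ₗ[ℂ] g := b.constr ℂ fun s => w s • b s
  have hd (s) : d (b s) = w s • b s := b.constr_basis ℂ _ s
  have hlie := JordanType.map_lie_basis b hX hY hd (fun i hi => h1 (i + 1) (by omega) i.isLt)
    (fun i hi => h2 i hi i.isLt) (fun i hi => h3 i hi i.isLt) h4 h5 h6 h7 h8 h9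
  let δ : LieDerivation ℂ g g :=
    { toLinearMap := d
      leibniz' := fun x y => by
        rw [b.leibniz_of_apply_eq_smul w hd hlie, ← lie_skew y, sub_neg_eq_add, add_comm] }
  have hδ : Function.Surjective δ :=
    b.surjective_of_apply_eq_smul w JordanType.basisWeight_ne_zero hd
  refine ⟨δ.adRangeMap, ?_, fun i hi => ?_, δ.adRangeMap_lie, δ.adRangeMap_bijective hδ⟩
  · rw [δ.adRangeMap_ad]; ext1; simp [δ, w, hY, hd, JordanType.basisWeight]
  · have hi : JordanType.weight ℂ i = i :=
      JordanType.weight_of_ne_zero (Fin.val_ne_zero_iff.mpr hi)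
    constructor <;> rw [δ.adRangeMap_ad] <;> ext1 <;>
      simp [δ, w, hX, hY, hd, JordanType.basisWeight, hi]
end
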